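/- Let C = (t_1, …, t_N) be a finite list of elements and ≺ an irreflexive and transitive binary relation on them. Consider the randomized fetch algorithm that maintains a window S of pairs (tuple, isDomi-bit), initialized to {(t_1, 0)}; for each subsequent t_i, scanning the current window: for each (t, ·) ∈ S, let Φ₁ = 1 iff t ≺ t_i and Φ₁' = Φ₁ ∧ r for an arbitrary bit r ∈ {0,1} chosen for this comparison; if Φ₁' = 1 then t_i is discarded and its scan stops; otherwise, if t_i ≺ t then (t, ·) is removed from S; if t_i is never discarded, (t_i, isDomi) is inserted into S, where isDomi is the OR of the Φ₁ values computed against window members during t_i's scan. Then for every choice of the bits r, the algorithm terminates with a window S satisfying: {t : (t, 0) ∈ S} = Sky(C) = {p ∈ C : there is no p' ∈ C with p' ≺ p}, and every pair (t, 1) ∈ S has t ∉ Sky(C). In particular, filtering the output by isDomi = 0 yields exactly the skyline, regardless of the random masking bits. -/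

import Mathlib

/-- Scan of the current window during the processing of tuple `t` in the
randomized fetch algorithm `ObliFetch`. `mask` is the stream of arbitrary
masking bits (one consumed per comparison, indexed by the counter `k`) and
`acc` accumulates the OR of the dominance flags `Φ₁` seen so far.
For each window member `(x, b)`: `Φ₁ = 1` iff `x ≺ t`; if the masked flag
`Φ₁ ∧ r` is `1` then `t` is discarded and the scan stops; otherwise `x` is
removed from the window when `t ≺ x`.
Returns `(new window, discarded?, isDomi accumulator, new counter)`. -/
def obliScan {τ : Type*} (r : τ → τ → Prop) [DecidableRel r]
    (mask : ℕ → Bool) (t : τ) :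
    List (τ × Bool) → ℕ → Bool → List (τ × Bool) × Bool × Bool × ℕ
  | [], k, acc => ([], false, acc, k)
  | (x, b) :: rest, k, acc =>
    let Φ₁ : Bool := decide (r x t)
    if Φ₁ && mask k then ((x, b) :: rest, true, acc || Φ₁, k + 1)
    else
      let res := obliScan r mask t rest (k + 1) (acc || Φ₁)
      if decide (r t x) then res
      else ((x, b) :: res.1, res.2.1, res.2.2.1, res.2.2.2)

/-- Main loop of the randomized fetch algorithm: processes the remaining input
tuples one by one, maintaining the window `S` of pairs (tuple, isDomi-bit) and
the masking-bit counter `k`. A never-discarded tuple is inserted with its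
accumulated isDomi bit. -/
def obliFetchGo {τ : Type*} (r : τ → τ → Prop) [DecidableRel r]
    (mask : ℕ → Bool) :
    List τ → List (τ × Bool) → ℕ → List (τ × Bool)
  | [], S, _ => S
  | t :: rest, S, k =>
    let res := obliScan r mask t S k false
    if res.2.1 then obliFetchGo r mask rest res.1 res.2.2.2
    else obliFetchGo r mask rest (res.1 ++ [(t, res.2.2.1)]) res.2.2.2

/-- The randomized fetch algorithm `ObliFetch`: the window is initialized to
`{(t₁, 0)}` and the remaining tuples are processed by `obliFetchGo`. -/
def obliFetch {τ : Type*} (r : τ → τ → Prop) [DecidableRel r]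
    (mask : ℕ → Bool) : List τ → List (τ × Bool)
  | [] => []
  | t :: rest => obliFetchGo r mask rest [(t, false)] 0

/-! After a prefix `P` of the input has been processed, the window consists of tuples from `P`;
those flagged `false` are exactly `Sky(P)`, and those flagged `true` are dominated in `P`.
The masking bits only decide whether a tuple `t` dominated in `P` is dropped or inserted.
If it is inserted, its flag is the OR of `x ≺ t` over the window, and this is `true` exactly when
`t` is dominated in `P`: a dominator can be replaced by a minimal one (`≺` is a strict order on
a finite set), which lies in `Sky(P)` and hence in the window. -/

section Scan

variable {τ : Type*} (r : τ → τ → Prop) [DecidableRel r] (mask : ℕ → Bool) (t : τ)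

theorem obliScan_fst_sublist (S : List (τ × Bool)) (k : ℕ) (acc : Bool) :
    List.Sublist (obliScan r mask t S k acc).1 S := by
  induction S generalizing k acc with
  | nil => simp [obliScan]
  | cons q S ih =>
    obtain ⟨x, b⟩ := q
    simp only [obliScan]
    split_ifs
    · exact .refl _
    · exact (ih _ _).cons _
    · exact (ih _ _).cons_cons _

theorem mem_obliScan_fst {S : List (τ × Bool)} {p : τ × Bool} (hp : p ∈ S) (htp : ¬ r t p.1)
    (k : ℕ) (acc : Bool) : p ∈ (obliScan r mask t S k acc).1 := by
  induction S generalizing k acc with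
  | nil => simp at hp
  | cons q S ih =>
    obtain ⟨x, b⟩ := q
    simp only [obliScan]
    rcases List.mem_cons.mp hp with rfl | hp
    · split_ifs <;> simp_all
    · split_ifs <;> simp [hp, ih hp]

theorem exists_rel_of_obliScan_discarded {S : List (τ × Bool)} {k : ℕ} {acc : Bool}
    (h : (obliScan r mask t S k acc).2.1 = true) : ∃ p ∈ S, r p.1 t := by
  induction S generalizing k acc with
  | nil => simp [obliScan] at h
  | cons q S ih =>
    obtain ⟨x, b⟩ := q
    simp only [obliScan] at h
    split_ifs at h with h₁
    · exact ⟨(x, b), List.mem_cons_self, by simp_all⟩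
    all_goals
      obtain ⟨p, hp, hpt⟩ := ih h
      exact ⟨p, List.mem_cons_of_mem _ hp, hpt⟩

theorem obliScan_of_not_discarded {S : List (τ × Bool)} {k : ℕ} {acc : Bool}
    (h : (obliScan r mask t S k acc).2.1 = false) :
    (obliScan r mask t S k acc).1 = S.filter (fun p => !decide (r t p.1)) ∧
      (obliScan r mask t S k acc).2.2.1 = (acc || S.any fun p => decide (r p.1 t)) := by
  induction S generalizing k acc with
  | nil => simp [obliScan]
  | cons q S ih =>
    obtain ⟨x, b⟩ := q
    simp only [obliScan] at h ⊢
    split_ifs at h ⊢ with h₁ h₂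
    all_goals
      obtain ⟨hfst, hacc⟩ := ih h
      simp [hfst, hacc, h₂, Bool.or_assoc]

end Scan

def skyline {τ : Type*} (r : τ → τ → Prop) (C : List τ) : Set τ :=
  {x | x ∈ C ∧ ¬ ∃ p' ∈ C, r p' x}

section Skyline

variable {τ : Type*} {r : τ → τ → Prop}

theorem mem_skyline_append_singleton (hirr : ∀ a, ¬ r a a) {P : List τ} {t x : τ} :
    x ∈ skyline r (P ++ [t]) ↔
      (x ∈ skyline r P ∧ ¬ r t x) ∨ (x = t ∧ ¬ ∃ p ∈ P, r p t) := by
  by_cases hx : x = t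
  · subst hx
    simp [skyline, hirr]
  · simp only [skyline, List.mem_append, List.mem_cons, List.not_mem_nil, or_false,
      exists_or_eq_imp, not_or, not_exists, not_and, Set.mem_ofPred_eq, hx, false_and]
    tauto

theorem exists_mem_skyline_rel (hirr : ∀ a, ¬ r a a) (htrans : ∀ a b c, r a b → r b c → r a c)
    {P : List τ} {x : τ} (h : ∃ p ∈ P, r p x) : ∃ m ∈ skyline r P, r m x := by
  have : IsStrictOrder τ r := { irrefl := hirr, trans := htrans }
  obtain ⟨m, ⟨hmP, hmx⟩, hmin⟩ :=
    (Set.wellFoundedOn_iff.mp (P.finite_toSet.wellFoundedOn (r := r))).has_min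
      {p | p ∈ P ∧ r p x} h
  exact ⟨m, ⟨hmP, fun ⟨q, hqP, hqm⟩ => hmin q ⟨hqP, htrans _ _ _ hqm hmx⟩ ⟨hqm, hqP, hmP⟩⟩, hmx⟩

end Skyline

structure IsSkylineWindow {τ : Type*} (r : τ → τ → Prop) (P : List τ) (S : List (τ × Bool)) :
    Prop where
  fst_mem : ∀ p ∈ S, p.1 ∈ P
  mem_false_iff : ∀ x, (x, false) ∈ S ↔ x ∈ skyline r P
  exists_rel_of_mem_true : ∀ x, (x, true) ∈ S → ∃ p ∈ P, r p x

namespace IsSkylineWindow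

variable {τ : Type*} {r : τ → τ → Prop} {P : List τ} {S : List (τ × Bool)} {t : τ}

theorem singleton (hirr : ∀ a, ¬ r a a) (t : τ) : IsSkylineWindow r [t] [(t, false)] where
  fst_mem := by simp
  mem_false_iff := by simp [skyline, hirr]
  exists_rel_of_mem_true := by simp

theorem any_rel_iff [DecidableRel r] (hirr : ∀ a, ¬ r a a)
    (htrans : ∀ a b c, r a b → r b c → r a c) (h : IsSkylineWindow r P S) :
    S.any (fun p => decide (r p.1 t)) = true ↔ ∃ p ∈ P, r p t := by
  simp only [List.any_eq_true, decide_eq_true_eq]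
  constructor
  · rintro ⟨p, hpS, hpt⟩
    exact ⟨p.1, h.fst_mem p hpS, hpt⟩
  · intro hdom
    obtain ⟨m, hm, hmt⟩ := exists_mem_skyline_rel hirr htrans hdom
    exact ⟨(m, false), (h.mem_false_iff m).mpr hm, hmt⟩

theorem of_dominated (hirr : ∀ a, ¬ r a a) (htrans : ∀ a b c, r a b → r b c → r a c)
    (h : IsSkylineWindow r P S) (hdom : ∃ y ∈ S, r y.1 t) {W : List (τ × Bool)} (hWS : W ⊆ S)
    (hkeep : ∀ p ∈ S, ¬ r t p.1 → p ∈ W) : IsSkylineWindow r (P ++ [t]) W where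
  fst_mem p hp := List.mem_append_left _ (h.fst_mem p (hWS hp))
  mem_false_iff x := by
    obtain ⟨y, hyS, hyt⟩ := hdom
    have hyP := h.fst_mem y hyS
    rw [mem_skyline_append_singleton hirr]
    constructor
    · intro hx
      have hsky := (h.mem_false_iff x).mp (hWS hx)
      exact Or.inl ⟨hsky, fun htx => hsky.2 ⟨y.1, hyP, htrans _ _ _ hyt htx⟩⟩
    · rintro (⟨hsky, htx⟩ | ⟨-, hund⟩)
      · exact hkeep _ ((h.mem_false_iff x).mpr hsky) htx
      · exact absurd ⟨y.1, hyP, hyt⟩ hund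
  exists_rel_of_mem_true x hx := by
    obtain ⟨p, hp, hpx⟩ := h.exists_rel_of_mem_true x (hWS hx)
    exact ⟨p, List.mem_append_left _ hp, hpx⟩

theorem filter_append [DecidableRel r] (hirr : ∀ a, ¬ r a a)
    (htrans : ∀ a b c, r a b → r b c → r a c) (h : IsSkylineWindow r P S) :
    IsSkylineWindow r (P ++ [t])
      (S.filter (fun p => !decide (r t p.1)) ++ [(t, S.any fun p => decide (r p.1 t))]) where
  fst_mem p hp := by
    rw [List.mem_append, List.mem_filter, List.mem_singleton] at hp
    rcases hp with ⟨hpS, -⟩ | rfl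
    · exact List.mem_append_left _ (h.fst_mem p hpS)
    · simp
  mem_false_iff x := by
    rw [mem_skyline_append_singleton hirr, ← h.mem_false_iff x, ← h.any_rel_iff hirr htrans]
    generalize S.any (fun p => decide (r p.1 t)) = b
    cases b <;> simp
  exists_rel_of_mem_true x hx := by
    rw [List.mem_append, List.mem_filter, List.mem_singleton, Prod.mk.injEq] at hx
    rcases hx with ⟨hxS, -⟩ | ⟨rfl, hany⟩
    · obtain ⟨p, hp, hpx⟩ := h.exists_rel_of_mem_true x hxS
      exact ⟨p, List.mem_append_left _ hp, hpx⟩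
    · obtain ⟨p, hp, hpx⟩ := (h.any_rel_iff hirr htrans).mp hany.symm
      exact ⟨p, List.mem_append_left _ hp, hpx⟩

end IsSkylineWindow

theorem isSkylineWindow_obliFetchGo {τ : Type*} {r : τ → τ → Prop} [DecidableRel r]
    (hirr : ∀ a, ¬ r a a) (htrans : ∀ a b c, r a b → r b c → r a c) (mask : ℕ → Bool)
    (rest : List τ) {P : List τ} {S : List (τ × Bool)} (h : IsSkylineWindow r P S) (k : ℕ) :
    IsSkylineWindow r (P ++ rest) (obliFetchGo r mask rest S k) := by
  induction rest generalizing P S k with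
  | nil => simpa [obliFetchGo] using h
  | cons t rest ih =>
    rw [show P ++ t :: rest = P ++ [t] ++ rest by simp, obliFetchGo]
    split_ifs with hdiscard
    · exact ih (h.of_dominated hirr htrans (exists_rel_of_obliScan_discarded r mask t hdiscard)
        (obliScan_fst_sublist r mask t S k false).subset
        (fun p hp htp => mem_obliScan_fst r mask t hp htp k false)) _
    · obtain ⟨hfst, hacc⟩ := obliScan_of_not_discarded r mask t (Bool.eq_false_iff.mpr hdiscard)
      rw [hfst, hacc, Bool.false_or]
      exact ih (h.filter_append hirr htrans) _

theorem obliFetch_correct_general {τ : Type*} (r : τ → τ → Prop) [DecidableRel r]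
    (hirr : ∀ a, ¬ r a a) (htrans : ∀ a b c, r a b → r b c → r a c)
    (C : List τ) (mask : ℕ → Bool) :
    (∀ x, (x, false) ∈ obliFetch r mask C ↔ (x ∈ C ∧ ¬ ∃ p' ∈ C, r p' x)) ∧
    (∀ x, (x, true) ∈ obliFetch r mask C → ¬ (x ∈ C ∧ ¬ ∃ p' ∈ C, r p' x)) := by
  cases C with
  | nil => simp [obliFetch]
  | cons t rest =>
    have h := isSkylineWindow_obliFetchGo hirr htrans mask rest
      (IsSkylineWindow.singleton hirr t) 0
    exact ⟨h.mem_false_iff, fun x hx hsky => hsky.2 (h.exists_rel_of_mem_true x hx)⟩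

/-- Correctness of the randomized fetch algorithm: for an irreflexive and
transitive dominance relation `≺` and every choice of the masking bits, the
tuples output with flag `isDomi = 0` are exactly the skyline
`Sky(C) = {p ∈ C : ¬∃ p' ∈ C, p' ≺ p}`, and every tuple output with flag
`isDomi = 1` is not in the skyline. -/
theorem obliFetch_correct {τ : Type*} (r : τ → τ → Prop) [DecidableRel r]
    (hirr : ∀ a, ¬ r a a) (htrans : ∀ a b c, r a b → r b c → r a c)
    (C : List τ) (hC : C ≠ []) (mask : ℕ → Bool) :
    (∀ x, (x, false) ∈ obliFetch r mask C ↔ (x ∈ C ∧ ¬ ∃ p' ∈ C, r p' x)) ∧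
    (∀ x, (x, true) ∈ obliFetch r mask C → ¬ (x ∈ C ∧ ¬ ∃ p' ∈ C, r p' x)) :=
  obliFetch_correct_general r hirr htrans C mask
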